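/- arXiv:1804.06667 — 6 statements merged into one kernel-verified Lean document; each statement's English description precedes it below -/
import Mathlib

section
/- There exists an infinite full binary tree with nodes labeled by {a,b} that is antiregular, i.e., every two distinct nodes have non-isomorphic (as labeled trees) subtrees rooted at them. -/
/-- A full infinite binary tree labeled by `{a,b}` is a function from positions
(words over `{0,1}`, i.e. `List Bool`) to labels (`Bool`, `true` = a, `false` = b). -/
def subtreeAt (t : List Bool → Bool) (w : List Bool) : List Bool → Bool :=
  fun u => t (w ++ u)

/-- A tree is antiregular if subtrees at distinct nodes differ. -/
def Antiregular (t : List Bool → Bool) : Prop :=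
  ∀ w w' : List Bool, subtreeAt t w = subtreeAt t w' → w = w'

/-!
The last letter of a node `v` selects one of two channels. Below a `true`, the label says
whether `|v|` is a power of two; below a `false`, it is the letter of `v` itself at position
`|v| - 2^⌊log₂ |v|⌋`. Through the first channel the subtree at `w` sees which of the numbers
`|w| + n`, `n ≥ 1`, are powers of two, and this determines `|w|`. In the second, as
`|v|` runs through `[2^k, 2^(k+1))` the position read sweeps through `[0, 2^k)`, so for
`2^k > |w|` the subtree at `w` reads off every letter of `w`.
-/

def readIndex (n : ℕ) : ℕ := n - 2 ^ Nat.log 2 n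

lemma readIndex_two_pow_add {k i : ℕ} (hi : i < 2 ^ k) : readIndex (2 ^ k + i) = i := by
  have hlog : Nat.log 2 (2 ^ k + i) = k :=
    Nat.log_eq_of_pow_le_of_lt_pow (Nat.le_add_right _ _) (by rw [pow_succ]; omega)
  simp [readIndex, hlog]

def antiregularTree (v : List Bool) : Bool :=
  if v.getLastD false then readIndex v.length = 0 else v.getD (readIndex v.length) false

lemma antiregularTree_concat_true (v : List Bool) :
    antiregularTree (v ++ [true]) = decide (readIndex (v.length + 1) = 0) := by
  simp [antiregularTree]

lemma antiregularTree_concat_false (v : List Bool) :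
    antiregularTree (v ++ [false]) = (v ++ [false]).getD (readIndex (v.length + 1)) false := by
  simp [antiregularTree]

lemma length_le_of_subtreeAt_antiregularTree_eq {w w' : List Bool}
    (h : subtreeAt antiregularTree w = subtreeAt antiregularTree w') :
    w'.length ≤ w.length := by
  by_contra! hlt
  set k := w'.length
  have hk : k < 2 ^ k := Nat.lt_two_pow_self
  let x := List.replicate (2 ^ k - w.length - 1) true
  have hx : x.length = 2 ^ k - w.length - 1 := List.length_replicate
  have hw : antiregularTree (w ++ x ++ [true]) = true := by
    rw [antiregularTree_concat_true, List.length_append, hx,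
      show w.length + (2 ^ k - w.length - 1) + 1 = 2 ^ k + 0 by omega,
      readIndex_two_pow_add (by omega)]
    rfl
  have hw' : antiregularTree (w' ++ x ++ [true]) = false := by
    rw [antiregularTree_concat_true, List.length_append, hx,
      show k + (2 ^ k - w.length - 1) + 1 = 2 ^ k + (k - w.length) by omega,
      readIndex_two_pow_add (by omega)]
    simp only [decide_eq_false_iff_not]
    omega
  have := congrFun h (x ++ [true])
  simp only [subtreeAt, ← List.append_assoc, hw, hw'] at this
  exact Bool.noConfusion this

lemma getD_eq_of_subtreeAt_antiregularTree_eq {w w' : List Bool}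
    (h : subtreeAt antiregularTree w = subtreeAt antiregularTree w')
    (hlen : w.length = w'.length) {i : ℕ} (hi : i < w.length) :
    w.getD i false = w'.getD i false := by
  set L := w.length
  have hL : L < 2 ^ L := Nat.lt_two_pow_self
  let x := List.replicate (2 ^ L + i - L - 1) false
  have hx : x.length = 2 ^ L + i - L - 1 := List.length_replicate
  have read (v : List Bool) (hv : v.length = L) :
      antiregularTree (v ++ x ++ [false]) = v.getD i false := by
    rw [antiregularTree_concat_false, List.length_append, hx,
      show v.length + (2 ^ L + i - L - 1) + 1 = 2 ^ L + i by omega,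
      readIndex_two_pow_add (by omega), List.append_assoc, List.getD_append _ _ _ _ (by omega)]
  have := congrFun h (x ++ [false])
  simp only [subtreeAt, ← List.append_assoc] at this
  rwa [read w rfl, read w' hlen.symm] at this

/-- antiregular trees exist. -/
theorem exists_antiregular_tree : ∃ t : List Bool → Bool, Antiregular t := by
  refine ⟨antiregularTree, fun w w' h => ?_⟩
  have hlen : w.length = w'.length :=
    le_antisymm (length_le_of_subtreeAt_antiregularTree_eq h.symm)
      (length_le_of_subtreeAt_antiregularTree_eq h)
  refine List.ext_getElem hlen fun i hi hi' => ?_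
  simpa only [List.getD_eq_getElem _ _ hi, List.getD_eq_getElem _ _ hi'] using
    getD_eq_of_subtreeAt_antiregularTree_eq h hlen hi
end

section
/- The full binary tree over {a,b} whose label at position w ∈ {0,1}* is a iff w is a palindrome is antiregular. -/
/-!
If `w` and `w'` (say `|w| ≤ |w'|`) have the same palindromic extensions, then `w' ++ w.reverse`
is a palindrome, which forces `w' = w ++ v`. Since `w ++ s ++ w.reverse` is a palindrome iff `s`
is, the word `v ++ [c]` is a palindrome for every letter `c`; so `v` would have to start with
every letter, and `v = []`.
-/

namespace List

variable {α : Type*}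

theorem reverse_eq_self_append_reverse_iff (w s : List α) :
    (w ++ s ++ w.reverse).reverse = w ++ s ++ w.reverse ↔ s.reverse = s := by
  simp only [reverse_append, reverse_reverse, append_assoc, append_cancel_left_eq,
    append_cancel_right_eq]

theorem prefix_of_reverse_eq_self_append_reverse {w w' : List α} (hle : w.length ≤ w'.length)
    (h : (w' ++ w.reverse).reverse = w' ++ w.reverse) : w <+: w' := by
  have hw : w <+: w' ++ w.reverse := by
    rw [← h, reverse_append, reverse_reverse]
    exact prefix_append _ _
  exact prefix_of_prefix_length_le hw (prefix_append _ _) hle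

theorem eq_nil_of_reverse_eq_self_append_singleton {v : List α} {a b : α} (hab : a ≠ b)
    (ha : (v ++ [a]).reverse = v ++ [a]) (hb : (v ++ [b]).reverse = v ++ [b]) : v = [] := by
  cases v with
  | nil => rfl
  | cons x xs =>
    simp only [reverse_append, reverse_cons, reverse_nil, nil_append, cons_append,
      cons.injEq] at ha hb
    exact absurd (ha.1.trans hb.1.symm) hab

theorem eq_of_forall_reverse_eq_self_append_iff [Nontrivial α] {w w' : List α}
    (h : ∀ u, (w ++ u).reverse = w ++ u ↔ (w' ++ u).reverse = w' ++ u) : w = w' := by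
  wlog hle : w.length ≤ w'.length generalizing w w'
  · exact (this (fun u => (h u).symm) (le_of_not_ge hle)).symm
  obtain ⟨v, rfl⟩ := prefix_of_reverse_eq_self_append_reverse hle ((h w.reverse).1 (by simp))
  have hv : ∀ c : α, (v ++ [c]).reverse = v ++ [c] := fun c => by
    have hw := (h ([c] ++ w.reverse)).1 (by simp)
    rwa [← append_assoc, append_assoc w v, reverse_eq_self_append_reverse_iff] at hw
  obtain ⟨a, b, hab⟩ := exists_pair_ne α
  rw [eq_nil_of_reverse_eq_self_append_singleton hab (hv a) (hv b), append_nil]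

end List

/-- the full binary tree whose node `w` is labeled `a` iff `w` is a
palindrome is antiregular. -/
theorem palindrome_tree_antiregular :
    Antiregular (fun w : List Bool => decide (w.reverse = w)) := by
  intro w w' h
  refine List.eq_of_forall_reverse_eq_self_append_iff fun u => ?_
  simpa only [subtreeAt, decide_eq_decide] using congrFun h u
end

section
/- The set of densely antiregular trees is nonempty and contains no regular tree; consequently, assuming that every nonempty regular tree language contains a regular tree, the language of densely antiregular trees is not regular. -/
def RegularTree (t : List Bool → Bool) : Prop :=
  (Set.range (subtreeAt t)).Finite

def DenselyAntiregular (t : List Bool → Bool) : Prop :=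
  ∀ w : List Bool, ∃ u : List Bool, Antiregular (subtreeAt t (w ++ u))

/-- An explicit antiregular tree: the subtree at `w` writes down the
encoding of `w` in unary along the ray `true :: false^n`. -/
noncomputable def AntiT : List Bool → Bool := fun u =>
  let r := u.reverse
  let n := (r.takeWhile (fun b => b = false)).length
  match r.drop n with
  | [] => false
  | _ :: rest => decide (n < Encodable.encode rest.reverse)

lemma antiT_take_drop (n : ℕ) (l : List Bool) :
    ((List.replicate n false ++ true :: l).takeWhile (fun b => b = false)).length = n ∧
    (List.replicate n false ++ true :: l).drop n = true :: l := by
  induction n with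
  | zero => simp [List.takeWhile]
  | succ k ih => simpa [List.replicate_succ, List.takeWhile] using ih

lemma antiT_key (w : List Bool) (n : ℕ) :
    AntiT (w ++ true :: List.replicate n false) = decide (n < Encodable.encode w) := by
  have hrev : (w ++ true :: List.replicate n false).reverse
      = List.replicate n false ++ true :: w.reverse := by
    simp [List.reverse_append, List.reverse_cons, List.reverse_replicate, List.append_assoc]
  obtain ⟨h1, h2⟩ := antiT_take_drop n w.reverse
  simp only [AntiT, hrev, h1, h2]
  simp

lemma antiT_antireg : Antiregular AntiT := by
  intro w w' h
  have key : ∀ n : ℕ, decide (n < Encodable.encode w) = decide (n < Encodable.encode w') := by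
    intro n
    have := congrFun h (true :: List.replicate n false)
    simpa [subtreeAt, antiT_key] using this
  have henc : Encodable.encode w = Encodable.encode w' := by
    by_contra hne
    rcases Nat.lt_or_ge (Encodable.encode w) (Encodable.encode w') with hlt | hge
    · have := key (Encodable.encode w); simp [hlt] at this
    · have hlt : Encodable.encode w' < Encodable.encode w :=
        lt_of_le_of_ne hge (fun e => hne e.symm)
      have := key (Encodable.encode w'); simp [hlt] at this
  exact Encodable.encode_injective henc

lemma subtreeAt_subtreeAt (t : List Bool → Bool) (v w : List Bool) :
    subtreeAt (subtreeAt t v) w = subtreeAt t (v ++ w) := by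
  funext u; simp [subtreeAt, List.append_assoc]

lemma antireg_subtree {t : List Bool → Bool} (ht : Antiregular t) (v : List Bool) :
    Antiregular (subtreeAt t v) := by
  intro w w' h
  rw [subtreeAt_subtreeAt, subtreeAt_subtreeAt] at h
  exact List.append_cancel_left (ht _ _ h)

lemma antiT_densely : DenselyAntiregular AntiT := by
  intro w
  exact ⟨[], antireg_subtree antiT_antireg _⟩

/-- the set of densely antiregular trees is nonempty and contains no
regular tree; hence, assuming Rabin's theorem that every nonempty regular tree
language contains a regular tree (taken as a hypothesis on an abstract notion
`RegLang` of regular tree languages), the language of densely antiregular trees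
is not regular. -/
theorem densely_antiregular_language_not_regular :
    (∃ t : List Bool → Bool, DenselyAntiregular t) ∧
    (∀ t : List Bool → Bool, RegularTree t → ¬ DenselyAntiregular t) ∧
    (∀ RegLang : Set (List Bool → Bool) → Prop,
      (∀ L, RegLang L → L.Nonempty → ∃ t ∈ L, RegularTree t) →
      ¬ RegLang {t | DenselyAntiregular t}) := by
  have h1 : ∃ t : List Bool → Bool, DenselyAntiregular t := ⟨AntiT, antiT_densely⟩
  have h2 : ∀ t : List Bool → Bool, RegularTree t → ¬ DenselyAntiregular t := by
    intro t hreg hd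
    obtain ⟨u, hu⟩ := hd []
    set s := subtreeAt t ([] ++ u) with hs
    have hsub : Set.range (subtreeAt s) ⊆ Set.range (subtreeAt t) := by
      rintro _ ⟨w, rfl⟩
      exact ⟨([] ++ u) ++ w, (subtreeAt_subtreeAt t ([] ++ u) w).symm⟩
    have hinf : (Set.range (subtreeAt s)).Infinite :=
      Set.infinite_range_of_injective (fun a b h => hu a b h)
    exact hinf (hreg.subset hsub)
  refine ⟨h1, h2, ?_⟩
  intro RegLang hRabin hmem
  obtain ⟨t, htL, htreg⟩ := hRabin _ hmem (by obtain ⟨t, ht⟩ := h1; exact ⟨t, ht⟩)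
  exact h2 t htreg htL
end

section
/- For t ∈ C(C{a,b}): every subtree of the flattening μ(t) contains a port if and only if (1) every subtree of t contains a port, and (2) the label of every node of t is a term in which every subtree contains a port. -/
namespace OmegaClone

/-- A (possibly infinite) raw tree over a ranked set `A`, with ports.
Positions are lists of child indices; a node is labeled either by a letter
`⟨k, x⟩` (a letter `x` of rank `k`, having `k` children `0,…,k-1`) or by a
port name `j ∈ ℕ` (a leaf). `none` means the position is not a node. -/
def RawTree (A : ℕ → Type) : Type :=
  List ℕ → Option ((Σ k : ℕ, A k) ⊕ ℕ)

/-- `t` is a term of rank `n` over `A` (an element of rank `n` of `CA`):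
the root exists and is not a port (excluding the trivial port-tree), a
position `w ++ [i]` is a node iff `w` is labeled by a letter of rank `> i`,
all port names are `< n`, and every port name `< n` occurs. -/
def IsTerm (A : ℕ → Type) (n : ℕ) (t : RawTree A) : Prop :=
  (∃ k x, t [] = some (Sum.inl ⟨k, x⟩)) ∧
  (∀ w i, (t (w ++ [i])).isSome ↔ ∃ k x, t w = some (Sum.inl ⟨k, x⟩) ∧ i < k) ∧
  (∀ w j, t w = some (Sum.inr j) → j < n) ∧
  (∀ j, j < n → ∃ w, t w = some (Sum.inr j))

/-- Trees whose node labels are themselves raw trees over `A`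
(i.e. raw trees over the ranked set `CA`). -/
abbrev OuterTree (A : ℕ → Type) : Type := RawTree (fun _ => RawTree A)

/-- `t ∈ C(CA)` has rank `n`: it is a term of rank `n` whose node labels are
terms of the rank given by the arity of the node. -/
def IsTerm2 (A : ℕ → Type) (n : ℕ) (t : OuterTree A) : Prop :=
  IsTerm (fun _ => RawTree A) n t ∧
  ∀ w k s, t w = some (Sum.inl ⟨k, s⟩) → IsTerm A k s

/-- Auxiliary state for computing the flattening: either a pair
(node `v` of the outer tree, position `w` inside the label of `v`),
or a port name of the outer tree. -/
def resolve (A : ℕ → Type) (t : OuterTree A) (v : List ℕ) :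
    Option ((List ℕ × List ℕ) ⊕ ℕ) :=
  match t v with
  | some (Sum.inl _) => some (Sum.inl (v, ([] : List ℕ)))
  | some (Sum.inr j) => some (Sum.inr j)
  | none => none

/-- One navigation step of the flattening: from the current state, move to
child number `i`; a port `j` occurring inside a label redirects to the
`j`-th child of the current outer node (substitution). -/
def stepF (A : ℕ → Type) (t : OuterTree A)
    (st : (List ℕ × List ℕ) ⊕ ℕ) (i : ℕ) :
    Option ((List ℕ × List ℕ) ⊕ ℕ) :=
  match st with
  | Sum.inr _ => none
  | Sum.inl (v, w) =>
    match t v with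
    | some (Sum.inl ⟨_, s⟩) =>
      match s (w ++ [i]) with
      | some (Sum.inl _) => some (Sum.inl (v, w ++ [i]))
      | some (Sum.inr j) => resolve A t (v ++ [j])
      | none => none
    | _ => none

/-- The flattening `μ : C(CA) → CA`: the label of `μ(t)` at a position `p` is
obtained by navigating through `t`, substituting (recursively) the flattened
child subtrees of each node into the ports of its label. -/
def flatten (A : ℕ → Type) (t : OuterTree A) : RawTree A :=
  fun p =>
    (p.foldl (fun ost i => ost.bind (fun st => stepF A t st i))
        (resolve A t [])).bind
      (fun st =>
        match st with
        | Sum.inl (v, w) =>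
          match t v with
          | some (Sum.inl ⟨_, s⟩) =>
            match s w with
            | some (Sum.inl x) => some (Sum.inl x)
            | _ => none
          | _ => none
        | Sum.inr j => some (Sum.inr j))

/-- The unit `η : A → CA`: a letter of rank `k` becomes the term with that
letter at the root and ports `0,…,k-1` as its children. -/
def unitRaw (A : ℕ → Type) (k : ℕ) (x : A k) : RawTree A :=
  fun p =>
    match p with
    | [] => some (Sum.inl ⟨k, x⟩)
    | [i] => if i < k then some (Sum.inr i) else none
    | _ => none

/-- Action of `C` on (rank-preserving) functions: node-wise relabeling. -/
def cmap {A B : ℕ → Type} (h : ∀ k, A k → B k) (t : RawTree A) : RawTree B :=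
  fun p => (t p).map (Sum.map (fun x => ⟨x.1, h x.1 x.2⟩) id)

/-- The subtree of `t` rooted at node `w`. -/
def subAt {A : ℕ → Type} (t : RawTree A) (w : List ℕ) : RawTree A :=
  fun u => t (w ++ u)

/-- `t` contains a port. -/
def HasPort {A : ℕ → Type} (t : RawTree A) : Prop :=
  ∃ w j, t w = some (Sum.inr j)

/-- every subtree of `t` contains a port -/
def HasPortEverywhere {A : ℕ → Type} (t : RawTree A) : Prop :=
  ∀ w, (t w).isSome → HasPort (subAt t w)

/-- some port name occurs at least twice in `t` -/
def PortTwice {A : ℕ → Type} (t : RawTree A) : Prop :=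
  ∃ w w' j, w ≠ w' ∧ t w = some (Sum.inr j) ∧ t w' = some (Sum.inr j)

/-- subtrees at distinct nodes of `t` are distinct -/
def Antiregular {A : ℕ → Type} (t : RawTree A) : Prop :=
  ∀ w w', (t w).isSome → (t w').isSome → subAt t w = subAt t w' → w = w'

/-- every node of `t` has a descendant whose subtree is antiregular -/
def DenselyAntiregular {A : ℕ → Type} (t : RawTree A) : Prop :=
  ∀ w, (t w).isSome → ∃ u, (t (w ++ u)).isSome ∧ Antiregular (subAt t (w ++ u))

/-- the ranked alphabet `{a,b}`, both letters of rank `2` -/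
inductive AB : Type | a : AB | b : AB

def abA : ℕ → Type
  | 2 => AB
  | _ => Empty

/-- kind 1: some subtree has no ports and is not densely antiregular -/
def Kind1 (s : RawTree abA) : Prop :=
  ∃ w, (s w).isSome ∧ ¬ HasPort (subAt s w) ∧ ¬ DenselyAntiregular (subAt s w)

/-- kind 2: some subtree has no ports and every portless subtree is densely antiregular -/
def Kind2 (s : RawTree abA) : Prop :=
  (∃ w, (s w).isSome ∧ ¬ HasPort (subAt s w)) ∧
  ∀ w, (s w).isSome → ¬ HasPort (subAt s w) → DenselyAntiregular (subAt s w)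

/-- kind 3: every subtree has a port and some port name is used at least twice -/
def Kind3 (s : RawTree abA) : Prop :=
  HasPortEverywhere s ∧ PortTwice s

/-- kind 4: every subtree has a port and no port name is used twice -/
def Kind4 (s : RawTree abA) : Prop :=
  HasPortEverywhere s ∧ ¬ PortTwice s

end OmegaClone

namespace OmegaClone

section Aux

variable {A : ℕ → Type}

/-- Navigation: iterate `stepF` along a path. -/
def nav (t : OuterTree A) (o : Option ((List ℕ × List ℕ) ⊕ ℕ)) (p : List ℕ) :
    Option ((List ℕ × List ℕ) ⊕ ℕ) :=
  p.foldl (fun ost i => ost.bind (fun st => stepF A t st i)) o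

/-- Final labeling used by `flatten`. -/
def post (t : OuterTree A) : ((List ℕ × List ℕ) ⊕ ℕ) → Option ((Σ k : ℕ, A k) ⊕ ℕ)
  | Sum.inl (v, w) =>
    match t v with
    | some (Sum.inl ⟨_, s⟩) =>
      match s w with
      | some (Sum.inl x) => some (Sum.inl x)
      | _ => none
    | _ => none
  | Sum.inr j => some (Sum.inr j)

lemma flatten_eq (t : OuterTree A) (p : List ℕ) :
    flatten A t p = (nav t (resolve A t []) p).bind (post t) := by
  show (nav t (resolve A t []) p).bind _ = _
  congr 1

lemma nav_nil (t : OuterTree A) (o : Option ((List ℕ × List ℕ) ⊕ ℕ)) :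
    nav t o [] = o := rfl

lemma nav_single (t : OuterTree A) (st : (List ℕ × List ℕ) ⊕ ℕ) (i : ℕ) :
    nav t (some st) [i] = stepF A t st i := rfl

lemma nav_none (t : OuterTree A) (p : List ℕ) : nav t none p = none := by
  induction p with
  | nil => rfl
  | cons i p ih => simpa [nav] using ih

lemma nav_append (t : OuterTree A) (o : Option ((List ℕ × List ℕ) ⊕ ℕ))
    (p q : List ℕ) : nav t o (p ++ q) = nav t (nav t o p) q := by
  simp [nav, List.foldl_append]

section TreeStruct

variable {B : ℕ → Type} (s : RawTree B)
  (hc : ∀ w i, (s (w ++ [i])).isSome ↔ ∃ k x, s w = some (Sum.inl ⟨k, x⟩) ∧ i < k)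

include hc in
lemma isSome_prefix : ∀ (u w : List ℕ), (s (w ++ u)).isSome → (s w).isSome := by
  intro u
  induction u using List.reverseRecOn with
  | nil => intro w h; simpa using h
  | append_singleton u i ih =>
    intro w h
    rw [← List.append_assoc] at h
    obtain ⟨k, x, hx, -⟩ := (hc (w ++ u) i).1 h
    exact ih w (by simp [hx])

include hc in
lemma letter_prefix (u : List ℕ) (i : ℕ) (w : List ℕ)
    (h : (s (w ++ i :: u)).isSome) : ∃ k x, s w = some (Sum.inl ⟨k, x⟩) := by
  have h1 : (s ((w ++ [i]) ++ u)).isSome := by simpa [List.append_assoc] using h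
  have h2 := isSome_prefix s hc u (w ++ [i]) h1
  obtain ⟨k, x, hx, -⟩ := (hc w i).1 h2
  exact ⟨k, x, hx⟩

end TreeStruct

section Steps

variable {n : ℕ} {t : OuterTree A}

lemma step_letter {v w : List ℕ} {k : ℕ} {s : RawTree A} {i : ℕ} {y : Σ k, A k}
    (hv : t v = some (Sum.inl ⟨k, s⟩)) (hi : s (w ++ [i]) = some (Sum.inl y)) :
    stepF A t (Sum.inl (v, w)) i = some (Sum.inl (v, w ++ [i])) := by
  simp [stepF, hv, hi]

lemma step_port {v w : List ℕ} {k : ℕ} {s : RawTree A} {i j : ℕ}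
    (hv : t v = some (Sum.inl ⟨k, s⟩)) (hi : s (w ++ [i]) = some (Sum.inr j)) :
    stepF A t (Sum.inl (v, w)) i = resolve A t (v ++ [j]) := by
  simp [stepF, hv, hi]

lemma inner_walk {v : List ℕ} {k : ℕ} {s : RawTree A}
    (hv : t v = some (Sum.inl ⟨k, s⟩)) (hs : IsTerm A k s) :
    ∀ (u w : List ℕ) (y : Σ k, A k), s (w ++ u) = some (Sum.inl y) →
      ∃ q, nav t (some (Sum.inl (v, w))) q = some (Sum.inl (v, w ++ u)) := by
  intro u
  induction u using List.reverseRecOn with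
  | nil => intro w y _; exact ⟨[], by simp [nav_nil]⟩
  | append_singleton u i ih =>
    intro w y h
    rw [← List.append_assoc] at h
    obtain ⟨k', x', hx', -⟩ := (hs.2.1 (w ++ u) i).1 (by rw [h]; rfl)
    obtain ⟨q, hq⟩ := ih w ⟨k', x'⟩ hx'
    refine ⟨q ++ [i], ?_⟩
    rw [nav_append, hq, nav_single, step_letter hv h, List.append_assoc]

lemma inner_port {v : List ℕ} {k : ℕ} {s : RawTree A} {w u : List ℕ} {j : ℕ}
    (hv : t v = some (Sum.inl ⟨k, s⟩)) (hs : IsTerm A k s)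
    (hw : ∃ y : Σ k, A k, s w = some (Sum.inl y))
    (h : s (w ++ u) = some (Sum.inr j)) :
    ∃ q, nav t (some (Sum.inl (v, w))) q = resolve A t (v ++ [j]) := by
  rcases List.eq_nil_or_concat u with rfl | ⟨u0, i, rfl⟩
  · obtain ⟨y, hy⟩ := hw
    rw [List.append_nil] at h; rw [h] at hy; simp at hy
  · rw [List.concat_eq_append, ← List.append_assoc] at h
    obtain ⟨k', x', hx', -⟩ := (hs.2.1 (w ++ u0) i).1 (by rw [h]; rfl)
    obtain ⟨q, hq⟩ := inner_walk hv hs u0 w ⟨k', x'⟩ hx'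
    refine ⟨q ++ [i], ?_⟩
    rw [nav_append, hq, nav_single, step_port hv h]

variable (ht : IsTerm2 A n t)

include ht in
lemma reach_node :
    ∀ (v : List ℕ) (k : ℕ) (s : RawTree A), t v = some (Sum.inl ⟨k, s⟩) →
      ∃ p, nav t (resolve A t []) p = some (Sum.inl (v, [])) := by
  intro v
  induction v using List.reverseRecOn with
  | nil => intro k s hv; exact ⟨[], by simp [nav_nil, resolve, hv]⟩
  | append_singleton v i ih =>
    intro k s hv
    obtain ⟨k', s', hv', hik⟩ := (ht.1.2.1 v i).1 (by simp [hv])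
    obtain ⟨p, hp⟩ := ih k' s' hv'
    have hs' : IsTerm A k' s' := ht.2 v k' s' hv'
    obtain ⟨wj, hwj⟩ := hs'.2.2.2 i hik
    obtain ⟨k0, x0, h0⟩ := hs'.1
    obtain ⟨q, hq⟩ := inner_port hv' hs' ⟨⟨k0, x0⟩, h0⟩
      (show s' ([] ++ wj) = some (Sum.inr i) by simpa using hwj)
    refine ⟨p ++ q, ?_⟩
    rw [nav_append, hp, hq]
    simp [resolve, hv]

include ht in
lemma outer_walk {j : ℕ} :
    ∀ (u v : List ℕ) (k : ℕ) (s : RawTree A), t v = some (Sum.inl ⟨k, s⟩) →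
      t (v ++ u) = some (Sum.inr j) →
      ∃ q, nav t (some (Sum.inl (v, []))) q = some (Sum.inr j) := by
  intro u
  induction u with
  | nil =>
    intro v k s hv h
    rw [List.append_nil, hv] at h; simp at h
  | cons i u1 ih =>
    intro v k s hv h
    have hch : (t ((v ++ [i]) ++ u1)).isSome := by
      rw [List.append_assoc]; simp [h]
    have hsome_child : (t (v ++ [i])).isSome := isSome_prefix t ht.1.2.1 u1 (v ++ [i]) hch
    obtain ⟨k', s', hv', hik⟩ := (ht.1.2.1 v i).1 hsome_child
    rw [hv] at hv'
    obtain ⟨rfl, hss⟩ : k = k' ∧ HEq s s' := by simpa using hv'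
    have hss' : s = s' := eq_of_heq hss
    subst hss'
    have hs := ht.2 v k s hv
    obtain ⟨wj, hwj⟩ := hs.2.2.2 i hik
    obtain ⟨k0, x0, h0⟩ := hs.1
    obtain ⟨q1, hq1⟩ := inner_port hv hs ⟨⟨k0, x0⟩, h0⟩
      (show s ([] ++ wj) = some (Sum.inr i) by simpa using hwj)
    rcases hchild : t (v ++ [i]) with _ | ch
    · rw [hchild] at hsome_child; simp at hsome_child
    rcases ch with ⟨k2, s2⟩ | j1
    · have h' : t ((v ++ [i]) ++ u1) = some (Sum.inr j) := by
        rw [List.append_assoc]; exact h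
      obtain ⟨q2, hq2⟩ := ih (v ++ [i]) k2 s2 hchild h'
      refine ⟨q1 ++ q2, ?_⟩
      rw [nav_append, hq1]
      have hres : resolve A t (v ++ [i]) = some (Sum.inl (v ++ [i], [])) := by
        simp [resolve, hchild]
      rw [hres]; exact hq2
    · cases u1 with
      | nil =>
        have h' : t (v ++ [i]) = some (Sum.inr j) := by simpa using h
        rw [hchild] at h'
        obtain rfl : j1 = j := by simpa using h'
        exact ⟨q1, by rw [hq1]; simp [resolve, hchild]⟩
      | cons i2 u2 =>
        exfalso
        obtain ⟨k3, x3, h3⟩ := letter_prefix t ht.1.2.1 u2 i2 (v ++ [i]) hch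
        rw [hchild] at h3; simp at h3

lemma nav_inv (t : OuterTree A) (v w : List ℕ) :
    ∀ (u : List ℕ) (st : (List ℕ × List ℕ) ⊕ ℕ),
      nav t (some (Sum.inl (v, w))) u = some st →
      (∃ a b, st = Sum.inl (v ++ a, b)) ∨
        (∃ a j, st = Sum.inr j ∧ t (v ++ a) = some (Sum.inr j)) := by
  intro u
  induction u using List.reverseRecOn with
  | nil =>
    intro st h
    rw [nav_nil] at h
    exact Or.inl ⟨[], w, by simp [← Option.some.inj h]⟩
  | append_singleton u i ih =>
    intro st h
    rw [nav_append] at h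
    rcases h0 : nav t (some (Sum.inl (v, w))) u with _ | st0
    · rw [h0, nav_none] at h; exact absurd h (by simp)
    rw [h0, nav_single] at h
    rcases ih st0 h0 with ⟨a, b, rfl⟩ | ⟨a, j, rfl, hj⟩
    · rcases h1 : t (v ++ a) with _ | x1
      · simp [stepF, h1] at h
      rcases x1 with ⟨k1, s1⟩ | j1
      · rcases h2 : s1 (b ++ [i]) with _ | y
        · simp [stepF, h1, h2] at h
        rcases y with y | j0
        · rw [step_letter h1 h2] at h
          exact Or.inl ⟨a, b ++ [i], (Option.some.inj h).symm⟩
        · rw [step_port h1 h2, List.append_assoc] at h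
          rcases h3 : t (v ++ (a ++ [j0])) with _ | x3
          · simp [resolve, h3] at h
          rcases x3 with ⟨k3, s3⟩ | j3
          · simp only [resolve, h3] at h
            exact Or.inl ⟨a ++ [j0], [], (Option.some.inj h).symm⟩
          · simp only [resolve, h3] at h
            exact Or.inr ⟨a ++ [j0], j3, (Option.some.inj h).symm, h3⟩
      · simp [stepF, h1] at h
    · simp [stepF] at h

lemma nav_inv2 {t : OuterTree A} {v : List ℕ} {k : ℕ} {s : RawTree A}
    (hv : t v = some (Sum.inl ⟨k, s⟩)) (w : List ℕ) :
    ∀ (u : List ℕ) (st : (List ℕ × List ℕ) ⊕ ℕ),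
      nav t (some (Sum.inl (v, w))) u = some st →
      (∃ x, st = Sum.inl (v, w ++ x)) ∨ (∃ x j, s (w ++ x) = some (Sum.inr j)) := by
  intro u
  induction u using List.reverseRecOn with
  | nil =>
    intro st h
    rw [nav_nil] at h
    exact Or.inl ⟨[], by simp [← Option.some.inj h]⟩
  | append_singleton u i ih =>
    intro st h
    rw [nav_append] at h
    rcases h0 : nav t (some (Sum.inl (v, w))) u with _ | st0
    · rw [h0, nav_none] at h; exact absurd h (by simp)
    rw [h0, nav_single] at h
    rcases ih st0 h0 with ⟨x, rfl⟩ | hr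
    · rcases h2 : s ((w ++ x) ++ [i]) with _ | y
      · have h2' : s (w ++ (x ++ [i])) = none := by rw [← List.append_assoc]; exact h2
        simp [stepF, hv, h2'] at h
      rcases y with y | j0
      · rw [step_letter hv h2] at h
        exact Or.inl ⟨x ++ [i], by rw [← Option.some.inj h, List.append_assoc]⟩
      · refine Or.inr ⟨x ++ [i], j0, ?_⟩
        rw [← List.append_assoc]; exact h2
    · exact Or.inr hr

lemma flatten_port {t : OuterTree A} {p : List ℕ} {j : ℕ}
    (h : nav t (resolve A t []) p = some (Sum.inr j)) :
    flatten A t p = some (Sum.inr j) := by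
  rw [flatten_eq, h]; rfl

lemma port_of_flatten {t : OuterTree A} {p : List ℕ} {j : ℕ}
    (h : flatten A t p = some (Sum.inr j)) :
    nav t (resolve A t []) p = some (Sum.inr j) := by
  rw [flatten_eq] at h
  rcases hnav : nav t (resolve A t []) p with _ | st
  · rw [hnav] at h; simp at h
  rw [hnav] at h
  rcases st with ⟨v, w⟩ | j'
  · exfalso
    rcases h1 : t v with _ | x1
    · simp [post, h1] at h
    rcases x1 with ⟨k1, s1⟩ | j1
    · rcases h2 : s1 w with _ | y
      · simp [post, h1, h2] at h
      rcases y with y | j2 <;> simp [post, h1, h2] at h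
    · simp [post, h1] at h
  · obtain rfl : j' = j := by simpa [post] using h
    rfl

lemma flatten_isSome {t : OuterTree A} {p : List ℕ} {v w : List ℕ} {k : ℕ}
    {s : RawTree A} {y : Σ k, A k}
    (hnav : nav t (resolve A t []) p = some (Sum.inl (v, w)))
    (hv : t v = some (Sum.inl ⟨k, s⟩)) (hw : s w = some (Sum.inl y)) :
    (flatten A t p).isSome := by
  rw [flatten_eq, hnav]
  simp [post, hv, hw]

end Steps

end Aux

/-- Lemma 4 of the paper: every subtree of `μ(t)` has a port iff
every subtree of `t` has a port and every subtree of every node label of `t`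
has a port. -/
theorem flatten_hasPortEverywhere_iff
    (n : ℕ) (t : OuterTree abA) (ht : IsTerm2 abA n t) :
    HasPortEverywhere (flatten abA t) ↔
      (HasPortEverywhere t ∧
       ∀ (v : List ℕ) (k : ℕ) (r : RawTree abA),
         t v = some (Sum.inl ⟨k, r⟩) → HasPortEverywhere r) := by
  constructor
  · intro H
    refine ⟨?_, ?_⟩
    · -- every subtree of `t` has a port
      intro v hv
      rcases h1 : t v with _ | x
      · rw [h1] at hv; simp at hv
      rcases x with ⟨k, s⟩ | j
      · obtain ⟨p, hp⟩ := reach_node ht v k s h1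
        have hs := ht.2 v k s h1
        obtain ⟨k0, x0, h0⟩ := hs.1
        have hfl : (flatten abA t p).isSome := flatten_isSome hp h1 h0
        obtain ⟨u, j, hu⟩ := H p hfl
        have hu' : flatten abA t (p ++ u) = some (Sum.inr j) := hu
        have hnav := port_of_flatten hu'
        rw [nav_append, hp] at hnav
        rcases nav_inv t v [] u _ hnav with ⟨a, b, hab⟩ | ⟨a, j', hj, ha⟩
        · exact absurd hab (by simp)
        · obtain rfl : j = j' := by simpa using hj
          exact ⟨a, j, ha⟩
      · exact ⟨[], j, by simpa [subAt] using h1⟩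
    · -- every subtree of every label has a port
      intro v k s hv w hw
      have hs := ht.2 v k s hv
      rcases h2 : s w with _ | y
      · rw [h2] at hw; simp at hw
      rcases y with y | j
      · obtain ⟨p, hp⟩ := reach_node ht v k s hv
        obtain ⟨q, hq⟩ := inner_walk hv hs w [] y (by simpa using h2)
        have hq' : nav t (some (Sum.inl (v, []))) q = some (Sum.inl (v, w)) := by
          simpa using hq
        have hnavpq : nav t (resolve abA t []) (p ++ q) = some (Sum.inl (v, w)) := by
          rw [nav_append, hp, hq']
        have hfl : (flatten abA t (p ++ q)).isSome := flatten_isSome hnavpq hv h2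
        obtain ⟨u, j, hu⟩ := H (p ++ q) hfl
        have hu' : flatten abA t ((p ++ q) ++ u) = some (Sum.inr j) := hu
        have hnav := port_of_flatten hu'
        rw [nav_append, hnavpq] at hnav
        rcases nav_inv2 hv w u _ hnav with ⟨x, hx⟩ | ⟨x, j', hj'⟩
        · exact absurd hx (by simp)
        · exact ⟨x, j', hj'⟩
      · exact ⟨[], j, by simpa [subAt] using h2⟩
  · rintro ⟨H1, H2⟩
    intro p hp
    rcases hnav : nav t (resolve abA t []) p with _ | st
    · rw [flatten_eq, hnav] at hp; simp at hp
    rcases st with ⟨v, w⟩ | j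
    · rw [flatten_eq, hnav] at hp
      rcases h1 : t v with _ | x
      · simp [post, h1] at hp
      rcases x with ⟨k, s⟩ | j
      swap
      · simp [post, h1] at hp
      rcases h2 : s w with _ | y
      · simp [post, h1, h2] at hp
      rcases y with y | j0
      swap
      · simp [post, h1, h2] at hp
      have hs := ht.2 v k s h1
      obtain ⟨u, j, hu⟩ := H2 v k s h1 w (by simp [h2])
      have hu' : s (w ++ u) = some (Sum.inr j) := hu
      have hjk : j < k := hs.2.2.1 (w ++ u) j hu'
      obtain ⟨q1, hq1⟩ := inner_port h1 hs ⟨y, h2⟩ hu'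
      have hchild : (t (v ++ [j])).isSome := (ht.1.2.1 v j).2 ⟨k, s, h1, hjk⟩
      rcases h3 : t (v ++ [j]) with _ | x3
      · rw [h3] at hchild; simp at hchild
      rcases x3 with ⟨k3, s3⟩ | j3
      · obtain ⟨a, j4, ha⟩ := H1 (v ++ [j]) (by simp [h3])
        have ha' : t ((v ++ [j]) ++ a) = some (Sum.inr j4) := ha
        obtain ⟨q2, hq2⟩ := outer_walk ht a (v ++ [j]) k3 s3 h3 ha'
        refine ⟨q1 ++ q2, j4, ?_⟩
        show flatten abA t (p ++ (q1 ++ q2)) = some (Sum.inr j4)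
        apply flatten_port
        rw [show p ++ (q1 ++ q2) = (p ++ q1) ++ q2 by rw [List.append_assoc],
          nav_append, nav_append, hnav, hq1]
        rw [show resolve abA t (v ++ [j]) = some (Sum.inl (v ++ [j], [])) by
          simp [resolve, h3]]
        exact hq2
      · refine ⟨q1, j3, ?_⟩
        show flatten abA t (p ++ q1) = some (Sum.inr j3)
        apply flatten_port
        rw [nav_append, hnav, hq1]
        simp [resolve, h3]
    · refine ⟨[], j, ?_⟩
      show flatten abA t (p ++ []) = some (Sum.inr j)
      rw [List.append_nil]
      exact flatten_port hnav

end OmegaClone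
end

section
/- For t ∈ C(C{a,b}): if some node of t is labeled by a term of kind 1, then the flattening μ(t) is of kind 1. -/
/-!
The flattening `μ(t)` is read off a walk through `t` whose state is an outer node `v` together
with a position inside the label of `v`; the walk passes to a child of `v` only when it meets a
port of that label. Since every port of a label occurs, every labelled node of `t` is entered at
the root of its label, and below a portless position of a label the walk never leaves that label.
Hence every portless subtree of a label is a subtree of `μ(t)`, and kind 1 is witnessed by such a
subtree.
-/

namespace OmegaClone

section Flatten

variable {A : ℕ → Type} {t : OuterTree A}

def stateAt (A : ℕ → Type) (t : OuterTree A) (p : List ℕ) :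
    Option ((List ℕ × List ℕ) ⊕ ℕ) :=
  p.foldl (fun ost i => ost.bind (fun st => stepF A t st i)) (resolve A t [])

lemma stateAt_append_singleton (p : List ℕ) (i : ℕ) :
    stateAt A t (p ++ [i]) = (stateAt A t p).bind (fun st => stepF A t st i) := by
  simp [stateAt, List.foldl_append]

lemma flatten_eq_none_of_stateAt {p : List ℕ} (h : stateAt A t p = none) :
    flatten A t p = none := by
  change (stateAt A t p).bind _ = none
  rw [h]
  rfl

lemma flatten_eq_of_stateAt {p v w : List ℕ} {k : ℕ} {s : RawTree A}
    (h : stateAt A t p = some (.inl (v, w))) (hv : t v = some (.inl ⟨k, s⟩))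
    (hw : ∀ j, s w ≠ some (.inr j)) :
    flatten A t p = s w := by
  change (stateAt A t p).bind _ = s w
  rw [h]
  cases hsw : s w with
  | none => simp [hv, hsw]
  | some y =>
    cases y with
    | inl x => simp [hv, hsw]
    | inr j => exact absurd hsw (hw j)

variable {p v : List ℕ} {k : ℕ} {s : RawTree A}

lemma stateAt_append_of_letter (hv : t v = some (.inl ⟨k, s⟩)) (hs : IsTerm A k s)
    {w : List ℕ} (hp : stateAt A t p = some (.inl (v, w))) :
    ∀ {u x}, s (w ++ u) = some (.inl x) → stateAt A t (p ++ u) = some (.inl (v, w ++ u)) := by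
  intro u
  induction u using List.reverseRecOn with
  | nil => intro _ _; simpa using hp
  | append_singleton u i ih =>
    intro x hx
    have hchild : (s (w ++ u ++ [i])).isSome := by rw [List.append_assoc, hx]; rfl
    obtain ⟨_, y, hy, -⟩ := (hs.2.1 (w ++ u) i).mp hchild
    rw [← List.append_assoc, stateAt_append_singleton, ih hy]
    simp [stepF, hv, hx]

lemma stateAt_append_of_port (hv : t v = some (.inl ⟨k, s⟩)) (hs : IsTerm A k s)
    (hp : stateAt A t p = some (.inl (v, []))) {u : List ℕ} {j : ℕ}
    (hu : s u = some (.inr j)) :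
    stateAt A t (p ++ u) = resolve A t (v ++ [j]) := by
  rcases List.eq_nil_or_concat' u with rfl | ⟨u, i, rfl⟩
  · obtain ⟨_, _, hroot⟩ := hs.1
    simp [hroot] at hu
  · obtain ⟨_, y, hy, -⟩ := (hs.2.1 u i).mp (by simp [hu])
    rw [← List.append_assoc, stateAt_append_singleton,
      stateAt_append_of_letter hv hs hp (u := u) (by simpa using hy)]
    simp [stepF, hv, hu]

lemma exists_stateAt_eq_root {n : ℕ} (ht : IsTerm2 A n t) :
    ∀ {v k s}, t v = some (.inl ⟨k, s⟩) → ∃ p, stateAt A t p = some (.inl (v, [])) := by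
  intro v
  induction v using List.reverseRecOn with
  | nil =>
    intro k s hv
    exact ⟨[], by simp [stateAt, resolve, hv]⟩
  | append_singleton v j ih =>
    intro k s hvj
    obtain ⟨k', s', hv, hj⟩ := (ht.1.2.1 v j).mp (by simp [hvj])
    obtain ⟨p, hp⟩ := ih hv
    have hs' := ht.2 v k' s' hv
    obtain ⟨u, hu⟩ := hs'.2.2.2 j hj
    refine ⟨p ++ u, ?_⟩
    rw [stateAt_append_of_port hv hs' hp hu]
    simp [resolve, hvj]

lemma stateAt_append_of_not_hasPort (hv : t v = some (.inl ⟨k, s⟩)) {w : List ℕ}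
    (hp : stateAt A t p = some (.inl (v, w))) (hnp : ¬ HasPort (subAt s w)) (u : List ℕ) :
    stateAt A t (p ++ u) = none ∨ stateAt A t (p ++ u) = some (.inl (v, w ++ u)) := by
  induction u using List.reverseRecOn with
  | nil => simp [hp]
  | append_singleton u i ih =>
    rw [← List.append_assoc, stateAt_append_singleton]
    rcases ih with h | h
    · simp [h]
    · rw [h]
      cases hc : s (w ++ (u ++ [i])) with
      | none => simp [stepF, hv, hc]
      | some y =>
        cases y with
        | inl x => simp [stepF, hv, hc]
        | inr j => exact absurd ⟨u ++ [i], j, by simpa [subAt] using hc⟩ hnp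

lemma subAt_flatten_eq_of_not_hasPort (hv : t v = some (.inl ⟨k, s⟩)) (hs : IsTerm A k s)
    {w : List ℕ} (hp : stateAt A t p = some (.inl (v, w))) (hnp : ¬ HasPort (subAt s w)) :
    subAt (flatten A t) p = subAt s w := by
  funext u
  change flatten A t (p ++ u) = s (w ++ u)
  have hnoport : ∀ j, s (w ++ u) ≠ some (.inr j) := fun j hj => hnp ⟨u, j, hj⟩
  rcases stateAt_append_of_not_hasPort hv hp hnp u with h | h
  · rw [flatten_eq_none_of_stateAt h]
    cases hsu : s (w ++ u) with
    | none => rfl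
    | some y =>
      cases y with
      | inl x => simp [stateAt_append_of_letter hv hs hp hsu] at h
      | inr j => exact absurd hsu (hnoport j)
  · exact flatten_eq_of_stateAt h hv hnoport

theorem exists_subAt_flatten_eq_of_not_hasPort {n : ℕ} (ht : IsTerm2 A n t)
    (hv : t v = some (.inl ⟨k, s⟩)) {w : List ℕ} (hw : (s w).isSome)
    (hnp : ¬ HasPort (subAt s w)) :
    ∃ p, subAt (flatten A t) p = subAt s w := by
  have hs := ht.2 v k s hv
  obtain ⟨x, hx⟩ : ∃ x, s w = some (.inl x) := by
    rcases hsw : s w with _ | x | j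
    · simp [hsw] at hw
    · exact ⟨x, rfl⟩
    · exact absurd ⟨[], j, by simpa [subAt] using hsw⟩ hnp
  obtain ⟨p, hp⟩ := exists_stateAt_eq_root ht hv
  exact ⟨p ++ w, subAt_flatten_eq_of_not_hasPort hv hs
    (stateAt_append_of_letter hv hs hp (u := w) (by simpa using hx)) hnp⟩

end Flatten

/-- Corollary, case (a): if some node of `t` is labeled by a
term of kind 1, then `μ(t)` is of kind 1. -/
theorem flatten_kind1
    (n : ℕ) (t : OuterTree abA) (ht : IsTerm2 abA n t)
    (h : ∃ (v : List ℕ) (k : ℕ) (r : RawTree abA),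
        t v = some (Sum.inl ⟨k, r⟩) ∧ Kind1 r) :
    Kind1 (flatten abA t) := by
  obtain ⟨v, k, r, hv, w, hw, hnp, hnda⟩ := h
  obtain ⟨p, hp⟩ := exists_subAt_flatten_eq_of_not_hasPort ht hv hw hnp
  have hroot : flatten abA t p = r w := by simpa [subAt] using congrFun hp []
  exact ⟨p, hroot ▸ hw, hp ▸ hnp, hp ▸ hnda⟩

end OmegaClone
end

section
/- For t ∈ C(C{a,b}): if all nodes of t are of kind 4, every subtree of t has a port, and every port name appears in t exactly once, then μ(t) is of kind 4; moreover μ(t) is determined by t together with the labels of its nodes (no information is lost). -/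
namespace OmegaClone

open Classical in
/-- The kind map `h : C{a,b} → A`: it keeps kind-4 terms unchanged and maps
every other term to (a code of) its kind. -/
noncomputable def kindMap (r : RawTree abA) : RawTree abA ⊕ ℕ :=
  if Kind4 r then Sum.inl r
  else Sum.inr (if Kind1 r then 1 else if Kind2 r then 2 else 3)

/-! ### Auxiliary development for the proof -/

lemma kindMap_of_kind4 {r : RawTree abA} (h : Kind4 r) : kindMap r = Sum.inl r := by
  simp [kindMap, h]

lemma append_singleton_inj {α} {xs ys : List α} {a b : α} (h : xs ++ [a] = ys ++ [b]) :
    xs = ys ∧ a = b := by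
  have := List.append_inj' h rfl
  exact ⟨this.1, by simpa using this.2⟩

lemma port_unique {s : RawTree abA} (h4 : Kind4 s) {w w' : List ℕ} {j : ℕ}
    (h : s w = some (Sum.inr j)) (h' : s w' = some (Sum.inr j)) : w = w' := by
  by_contra hne; exact h4.2 ⟨w, w', j, hne, h, h'⟩

/-- The sequence of navigation states. -/
def sts (t : OuterTree abA) (p : List ℕ) : Option ((List ℕ × List ℕ) ⊕ ℕ) :=
  p.foldl (fun ost i => ost.bind (fun st => stepF abA t st i)) (resolve abA t [])

lemma sts_concat (t : OuterTree abA) (p : List ℕ) (i : ℕ) :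
    sts t (p ++ [i]) = (sts t p).bind (fun st => stepF abA t st i) := by
  simp [sts, List.foldl_append]

/-- the readout of a navigation state -/
def readF (t : OuterTree abA) (st : (List ℕ × List ℕ) ⊕ ℕ) :
    Option ((Σ k, abA k) ⊕ ℕ) :=
  match st with
  | Sum.inl (v, w) =>
    match t v with
    | some (Sum.inl ⟨_, s⟩) =>
      match s w with
      | some (Sum.inl x) => some (Sum.inl x)
      | _ => none
    | _ => none
  | Sum.inr j => some (Sum.inr j)

lemma flatten_def (t : OuterTree abA) (p : List ℕ) :
    flatten abA t p = (sts t p).bind (readF t) := by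
  show Option.bind (sts t p) _ = _
  cases hst : sts t p with
  | none => rfl
  | some st =>
    simp only [Option.bind_some]
    rcases st with ⟨v, w⟩ | j
    · rcases hv : t v with _ | (⟨k, s⟩ | j0) <;> simp [readF, hv]
      rcases hw : s w with _ | (x | j0) <;> simp [hw]
    · rfl

/-- ancestors of an existing node are letter-labeled -/
lemma anc {A : ℕ → Type} {m : ℕ} {s : RawTree A} (hs : IsTerm A m s) :
    ∀ (u w : List ℕ), u ≠ [] → (s (w ++ u)).isSome →
      ∃ k x, s w = some (Sum.inl ⟨k, x⟩) := by
  intro u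
  induction u using List.reverseRecOn with
  | nil => intro w h; exact absurd rfl h
  | append_singleton u' i ih =>
    intro w _ hsome
    rw [← List.append_assoc] at hsome
    obtain ⟨k, x, hx, hik⟩ := (hs.2.1 (w ++ u') i).mp hsome
    rcases eq_or_ne u' [] with rfl | hne
    · exact ⟨k, x, by simpa using hx⟩
    · exact ih w hne (by rw [hx]; rfl)

lemma sts_root {n : ℕ} {t : OuterTree abA} (ht : IsTerm2 abA n t) :
    sts t [] = some (Sum.inl ([], [])) := by
  obtain ⟨k, s, hk⟩ := ht.1.1
  simp [sts, resolve, hk]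

/-- invariant: every reachable inl-state points at a letter inside a label -/
lemma sts_inv {n : ℕ} {t : OuterTree abA} (ht : IsTerm2 abA n t) :
    ∀ (p : List ℕ) (v w : List ℕ), sts t p = some (Sum.inl (v, w)) →
      ∃ k s, t v = some (Sum.inl ⟨k, s⟩) ∧ ∃ x, s w = some (Sum.inl x) := by
  intro p
  induction p using List.reverseRecOn with
  | nil =>
    intro v w h
    obtain ⟨k, s, hk⟩ := ht.1.1
    rw [sts_root ht] at h
    obtain ⟨rfl, rfl⟩ : ([] : List ℕ) = v ∧ ([] : List ℕ) = w := by
      injection h with h; injection h with h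
      exact ⟨congrArg Prod.fst h, congrArg Prod.snd h⟩
    obtain ⟨k', x, hx⟩ := (ht.2 [] k s hk).1
    exact ⟨k, s, hk, ⟨k', x⟩, hx⟩
  | append_singleton p i ih =>
    intro v w h
    rw [sts_concat] at h
    rcases h0 : sts t p with _ | st0
    · rw [h0] at h; simp at h
    rw [h0] at h
    simp only [Option.bind_some] at h
    rcases st0 with ⟨v0, w0⟩ | j0
    swap
    · simp [stepF] at h
    rcases hv0 : t v0 with _ | (⟨k0, s0⟩ | j0) <;> simp [stepF, hv0] at h
    rcases hs0 : s0 (w0 ++ [i]) with _ | (y | j) <;> simp [hs0] at h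
    · obtain ⟨rfl, rfl⟩ := h
      exact ⟨k0, s0, hv0, y, hs0⟩
    · rcases hvj : t (v0 ++ [j]) with _ | (⟨k1, s1⟩ | j1) <;> simp [resolve, hvj] at h
      obtain ⟨rfl, rfl⟩ := h
      obtain ⟨k', x, hx⟩ := (ht.2 (v0 ++ [j]) k1 s1 hvj).1
      exact ⟨k1, s1, hvj, ⟨k', x⟩, hx⟩

/-- navigation within a single label -/
lemma nav_inner {n : ℕ} {t : OuterTree abA} (ht : IsTerm2 abA n t)
    {v : List ℕ} {k : ℕ} {s : RawTree abA} (hv : t v = some (Sum.inl ⟨k, s⟩)) :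
    ∀ (u w p : List ℕ) (y : Σ k, abA k), sts t p = some (Sum.inl (v, w)) →
      s (w ++ u) = some (Sum.inl y) →
      sts t (p ++ u) = some (Sum.inl (v, w ++ u)) := by
  intro u
  induction u using List.reverseRecOn with
  | nil => intro w p y hp hy; simpa using hp
  | append_singleton u' i ih =>
    intro w p y hp hy
    rw [← List.append_assoc] at hy
    have hsome : (s ((w ++ u') ++ [i])).isSome := by rw [hy]; rfl
    obtain ⟨k', x', hx', _⟩ := ((ht.2 v k s hv).2.1 (w ++ u') i).mp hsome
    have hih := ih w p ⟨k', x'⟩ hp hx'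
    rw [show p ++ (u' ++ [i]) = (p ++ u') ++ [i] from (List.append_assoc p u' [i]).symm,
      sts_concat, hih]
    have hy2 : s (w ++ (u' ++ [i])) = some (Sum.inl y) := by
      rw [← List.append_assoc]; exact hy
    simp only [Option.bind_some]
    simp [stepF, hv, hy, hy2, List.append_assoc]

/-- navigation within a label ending at a port of the label -/
lemma nav_port {n : ℕ} {t : OuterTree abA} (ht : IsTerm2 abA n t)
    {v : List ℕ} {k : ℕ} {s : RawTree abA} (hv : t v = some (Sum.inl ⟨k, s⟩))
    (u w p : List ℕ) (j : ℕ) (y : Σ k, abA k)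
    (hp : sts t p = some (Sum.inl (v, w)))
    (hw : s w = some (Sum.inl y))
    (hu : s (w ++ u) = some (Sum.inr j)) :
    sts t (p ++ u) = resolve abA t (v ++ [j]) := by
  rcases List.eq_nil_or_concat u with rfl | ⟨u', i, rfl⟩
  · rw [List.append_nil] at hu; rw [hw] at hu; simp at hu
  simp only [List.concat_eq_append] at hu ⊢
  rw [← List.append_assoc] at hu
  have hsome : (s ((w ++ u') ++ [i])).isSome := by rw [hu]; rfl
  obtain ⟨k', x', hx', _⟩ := ((ht.2 v k s hv).2.1 (w ++ u') i).mp hsome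
  have hih := nav_inner ht hv u' w p ⟨k', x'⟩ hp hx'
  rw [show p ++ (u' ++ [i]) = (p ++ u') ++ [i] from (List.append_assoc p u' [i]).symm,
    sts_concat, hih]
  have hu2 : s (w ++ (u' ++ [i])) = some (Sum.inr j) := by
    rw [← List.append_assoc]; exact hu
  simp only [Option.bind_some]
  simp [stepF, hv, hu, hu2]

/-- navigation descending in the outer tree down to an outer port -/
lemma nav_outer {n : ℕ} {t : OuterTree abA} (ht : IsTerm2 abA n t) :
    ∀ (u v p : List ℕ) (j k : ℕ) (s : RawTree abA),
      t v = some (Sum.inl ⟨k, s⟩) → sts t p = some (Sum.inl (v, [])) →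
      t (v ++ u) = some (Sum.inr j) →
      ∃ q, sts t (p ++ q) = some (Sum.inr j) := by
  intro u
  induction u with
  | nil =>
    intro v p j k s hv hp hu
    rw [List.append_nil, hv] at hu; simp at hu
  | cons j1 u1 ih =>
    intro v p j k s hv hp hu
    have hs := ht.2 v k s hv
    have hu' : t ((v ++ [j1]) ++ u1) = some (Sum.inr j) := by
      rw [List.append_assoc]; simpa using hu
    have hsome1 : (t (v ++ [j1])).isSome := by
      rcases eq_or_ne u1 [] with rfl | hne
      · rw [List.append_nil] at hu'; rw [hu']; rfl
      · obtain ⟨k1, s1, hv1⟩ := anc ht.1 u1 (v ++ [j1]) hne (by rw [hu']; rfl)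
        rw [hv1]; rfl
    obtain ⟨k', x', hx', hj1k⟩ := (ht.1.2.1 v j1).mp hsome1
    have hj1 : j1 < k := by
      rw [hv] at hx'
      injection hx' with hx'; injection hx' with hx'
      obtain ⟨rfl, -⟩ := Sigma.mk.inj_iff.mp hx'
      exact hj1k
    obtain ⟨w1, hw1⟩ := hs.2.2.2 j1 hj1
    obtain ⟨k0, x0, hroot⟩ := hs.1
    have hres : sts t (p ++ w1) = resolve abA t (v ++ [j1]) :=
      nav_port ht hv w1 [] p j1 ⟨k0, x0⟩ hp hroot (by simpa using hw1)
    rcases eq_or_ne u1 [] with rfl | hne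
    · rw [List.append_nil] at hu'
      exact ⟨w1, by rw [hres]; simp [resolve, hu']⟩
    · obtain ⟨k1, s1, hv1⟩ := anc ht.1 u1 (v ++ [j1]) hne (by rw [hu']; rfl)
      have hres' : sts t (p ++ w1) = some (Sum.inl (v ++ [j1], [])) := by
        rw [hres]; simp [resolve, hv1]
      obtain ⟨q1, hq1⟩ := ih (v ++ [j1]) (p ++ w1) j k1 s1 hv1 hres' hu'
      exact ⟨w1 ++ q1, by rw [← List.append_assoc]; exact hq1⟩

lemma flatten_inr {t : OuterTree abA} (p : List ℕ) (j : ℕ) :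
    flatten abA t p = some (Sum.inr j) ↔ sts t p = some (Sum.inr j) := by
  rw [flatten_def]
  rcases hst : sts t p with _ | (⟨v, w⟩ | j')
  · simp
  · simp only [Option.bind_some]
    constructor
    · intro h
      exfalso
      rcases hv : t v with _ | (⟨k, s⟩ | j0) <;> simp [readF, hv] at h
      rcases hw : s w with _ | (x | j0) <;> simp [hw] at h
    · intro h; simp at h
  · simp [readF]

lemma step_ne_root {t : OuterTree abA} {st st' : (List ℕ × List ℕ) ⊕ ℕ} {i : ℕ}
    (h : stepF abA t st i = some st') : st' ≠ Sum.inl ([], []) := by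
  rcases st with ⟨v, w⟩ | j
  swap
  · simp [stepF] at h
  rcases hv : t v with _ | (⟨k, s⟩ | j) <;> simp [stepF, hv] at h
  rcases hw : s (w ++ [i]) with _ | (x | j) <;> simp [hw] at h
  · rw [← h]; simp
  · rcases hvj : t (v ++ [j]) with _ | (y | j') <;> simp [resolve, hvj] at h
    · rw [← h]; simp
    · rw [← h]; simp

/-- a state other than the root state determines the step producing it -/
lemma step_pred {n : ℕ} {t : OuterTree abA} (ht : IsTerm2 abA n t)
    (h1 : ∀ (v : List ℕ) (k : ℕ) (r : RawTree abA),
        t v = some (Sum.inl ⟨k, r⟩) → Kind4 r)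
    (h3 : ¬ PortTwice t)
    {stA stB : (List ℕ × List ℕ) ⊕ ℕ} {iA iB : ℕ} {st : (List ℕ × List ℕ) ⊕ ℕ}
    (hA : stepF abA t stA iA = some st) (hB : stepF abA t stB iB = some st) :
    stA = stB ∧ iA = iB := by
  rcases stA with ⟨vA, wA⟩ | jA
  swap
  · simp [stepF] at hA
  rcases stB with ⟨vB, wB⟩ | jB
  swap
  · simp [stepF] at hB
  rcases hvA : t vA with _ | (⟨kA, sA⟩ | j0) <;> simp [stepF, hvA] at hA
  rcases hvB : t vB with _ | (⟨kB, sB⟩ | j0) <;> simp [stepF, hvB] at hB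
  rcases hwA : sA (wA ++ [iA]) with _ | (xA | jA') <;> simp [hwA] at hA
  · rcases hwB : sB (wB ++ [iB]) with _ | (xB | jB') <;> simp [hwB] at hB
    · -- both inner steps
      rw [← hB] at hA
      injection hA with hA
      rw [Prod.mk.injEq] at hA
      obtain ⟨rfl, hw⟩ := hA
      obtain ⟨rfl, rfl⟩ := append_singleton_inj hw
      exact ⟨rfl, rfl⟩
    · -- A inner, B port: impossible
      exfalso
      rcases hvjB : t (vB ++ [jB']) with _ | (⟨k1, s1⟩ | j1) <;>
        simp [resolve, hvjB] at hB <;> rw [← hB] at hA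
      · injection hA with hA
        rw [Prod.mk.injEq] at hA
        simpa using hA.2
      · simp at hA
  · rcases hwB : sB (wB ++ [iB]) with _ | (xB | jB') <;> simp [hwB] at hB
    · -- A port, B inner: impossible
      exfalso
      rcases hvjA : t (vA ++ [jA']) with _ | (⟨k1, s1⟩ | j1) <;>
        simp [resolve, hvjA] at hA <;> rw [← hA] at hB
      · injection hB with hB
        rw [Prod.mk.injEq] at hB
        simpa using hB.2
      · simp at hB
    · -- both port steps
      have hVeq : vA ++ [jA'] = vB ++ [jB'] := by
        rcases hvjA : t (vA ++ [jA']) with _ | (⟨k1, s1⟩ | j1) <;>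
          simp [resolve, hvjA] at hA <;>
        rcases hvjB : t (vB ++ [jB']) with _ | (⟨k2, s2⟩ | j2) <;>
          simp [resolve, hvjB] at hB <;> rw [← hB] at hA
        · injection hA with hA
          rw [Prod.mk.injEq] at hA
          exact hA.1
        · simp at hA
        · simp at hA
        · injection hA with hA
          subst hA
          by_contra hne
          exact h3 ⟨vA ++ [jA'], vB ++ [jB'], j1, hne, hvjA, hvjB⟩
      obtain ⟨rfl, rfl⟩ := append_singleton_inj hVeq
      rw [hvA] at hvB
      injection hvB with hvB
      injection hvB with hvB
      obtain ⟨rfl, hsab⟩ := Sigma.mk.inj_iff.mp hvB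
      have hsEq : sA = sB := eq_of_heq hsab
      subst hsEq
      have h4 := h1 vA kA sA hvA
      obtain ⟨rfl, rfl⟩ := append_singleton_inj (port_unique h4 hwA hwB)
      exact ⟨rfl, rfl⟩

/-- injectivity of the state map -/
lemma sts_inj {n : ℕ} {t : OuterTree abA} (ht : IsTerm2 abA n t)
    (h1 : ∀ (v : List ℕ) (k : ℕ) (r : RawTree abA),
        t v = some (Sum.inl ⟨k, r⟩) → Kind4 r)
    (h3 : ¬ PortTwice t) :
    ∀ (N : ℕ) (p p' : List ℕ), p.length + p'.length ≤ N →
      ∀ st, sts t p = some st → sts t p' = some st → p = p' := by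
  intro N
  induction N with
  | zero =>
    intro p p' hl st hp hp'
    have h1' : p = [] := List.eq_nil_of_length_eq_zero (by omega)
    have h2' : p' = [] := List.eq_nil_of_length_eq_zero (by omega)
    rw [h1', h2']
  | succ N ih =>
    intro p p' hl st hp hp'
    rcases List.eq_nil_or_concat p with rfl | ⟨q, i, rfl⟩
    · rw [sts_root ht] at hp
      injection hp with hp
      rcases List.eq_nil_or_concat p' with rfl | ⟨q', i', rfl⟩
      · rfl
      · exfalso
        simp only [List.concat_eq_append] at hp'
        rw [sts_concat] at hp'
        rcases hq' : sts t q' with _ | st0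
        · rw [hq'] at hp'; simp at hp'
        rw [hq'] at hp'
        simp only [Option.bind_some] at hp'
        exact step_ne_root hp' hp.symm
    · simp only [List.concat_eq_append] at hp hl
      rcases List.eq_nil_or_concat p' with rfl | ⟨q', i', rfl⟩
      · exfalso
        rw [sts_root ht] at hp'
        injection hp' with hp'
        rw [sts_concat] at hp
        rcases hq : sts t q with _ | st0
        · rw [hq] at hp; simp at hp
        rw [hq] at hp
        simp only [Option.bind_some] at hp
        exact step_ne_root hp hp'.symm
      · simp only [List.concat_eq_append] at hp' hl ⊢
        rw [sts_concat] at hp hp'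
        rcases hq : sts t q with _ | st1
        · rw [hq] at hp; simp at hp
        rcases hq' : sts t q' with _ | st1'
        · rw [hq'] at hp'; simp at hp'
        rw [hq] at hp; rw [hq'] at hp'
        simp only [Option.bind_some] at hp hp'
        obtain ⟨hst, hi⟩ := step_pred ht h1 h3 hp hp'
        subst hst; subst hi
        have hlen : q.length + q'.length ≤ N := by
          simp only [List.length_append, List.length_singleton] at hl; omega
        rw [ih q q' hlen st1 hq hq']

/-- Corollary, case (g): if all nodes of `t` are of kind 4,
every subtree of `t` has a port, and every port name appears in `t` exactly
once (no port name twice), then `μ(t)` is of kind 4; moreover, `μ(t)` is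
determined by `Ch(t)`, i.e. by `t` together with the images of its node labels
under the kind map (no information is lost, since `h` is injective on kind-4
terms). -/
theorem flatten_kind4
    (n : ℕ) (t : OuterTree abA) (ht : IsTerm2 abA n t)
    (h1 : ∀ (v : List ℕ) (k : ℕ) (r : RawTree abA),
        t v = some (Sum.inl ⟨k, r⟩) → Kind4 r)
    (h2 : HasPortEverywhere t)
    (h3 : ¬ PortTwice t) :
    Kind4 (flatten abA t) ∧
    (∀ t' : OuterTree abA, IsTerm2 abA n t' →
      (∀ (v : List ℕ) (k : ℕ) (r : RawTree abA),
          t' v = some (Sum.inl ⟨k, r⟩) → Kind4 r) →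
      cmap (fun _ r => kindMap r) t = cmap (fun _ r => kindMap r) t' →
      flatten abA t = flatten abA t') := by
  constructor
  · constructor
    · -- HasPortEverywhere (flatten abA t)
      intro p hp
      rw [flatten_def] at hp
      rcases hst : sts t p with _ | st
      · rw [hst] at hp; simp at hp
      rcases st with ⟨v, w⟩ | j
      · obtain ⟨k, s, hv, x, hw⟩ := sts_inv ht p v w hst
        have hk4 := h1 v k s hv
        obtain ⟨u, j1, hu⟩ := hk4.1 w (by rw [hw]; rfl)
        have hu : s (w ++ u) = some (Sum.inr j1) := hu
        have hres := nav_port ht hv u w p j1 x hst hw hu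
        have hs := ht.2 v k s hv
        have hj1k : j1 < k := hs.2.2.1 (w ++ u) j1 hu
        have hsome1 : (t (v ++ [j1])).isSome := (ht.1.2.1 v j1).mpr ⟨k, s, hv, hj1k⟩
        rcases hvj : t (v ++ [j1]) with _ | (⟨k1, s1⟩ | j2)
        · rw [hvj] at hsome1; simp at hsome1
        · have hres' : sts t (p ++ u) = some (Sum.inl (v ++ [j1], [])) := by
            rw [hres]; simp [resolve, hvj]
          obtain ⟨u2, j2, hu2⟩ := h2 (v ++ [j1]) (by rw [hvj]; rfl)
          have hu2 : t ((v ++ [j1]) ++ u2) = some (Sum.inr j2) := hu2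
          obtain ⟨q, hq⟩ := nav_outer ht u2 (v ++ [j1]) (p ++ u) j2 k1 s1 hvj hres' hu2
          refine ⟨u ++ q, j2, ?_⟩
          show flatten abA t (p ++ (u ++ q)) = some (Sum.inr j2)
          rw [flatten_inr, ← List.append_assoc]
          exact hq
        · refine ⟨u, j2, ?_⟩
          show flatten abA t (p ++ u) = some (Sum.inr j2)
          rw [flatten_inr, hres]; simp [resolve, hvj]
      · refine ⟨[], j, ?_⟩
        show flatten abA t (p ++ []) = some (Sum.inr j)
        rw [List.append_nil, flatten_inr]
        exact hst
    · -- ¬ PortTwice (flatten abA t)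
      rintro ⟨p, p', j, hne, hp, hp'⟩
      rw [flatten_inr] at hp hp'
      exact hne (sts_inj ht h1 h3 (p.length + p'.length) p p' le_rfl _ hp hp')
  · intro t' ht' h1' hch
    have htt : t = t' := by
      funext p
      have hc := congrFun hch p
      simp only [cmap] at hc
      rcases hp : t p with _ | (⟨k, r⟩ | j) <;> rcases hp' : t' p with _ | (⟨k', r'⟩ | j') <;>
        rw [hp, hp'] at hc <;> simp at hc
      · -- both letters
        obtain ⟨rfl, hkm'⟩ := hc
        rw [kindMap_of_kind4 (h1 p k r hp), kindMap_of_kind4 (h1' p k r' hp')] at hkm'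
        injection hkm' with hkm'
        rw [hkm']
      · -- both ports
        rw [hc]
    rw [htt]

end OmegaClone
end
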